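/- Let k ≥ 2 and λ ≥ 1 be integers, and let x be an infinite word over a finite alphabet such that the lower density of AP(x,k,λ) is strictly less than (1 + ⌊(k² - k)/(λ² + λ)⌋)^{-1}. Then there exists a single nonempty finite word u with |u| ≤ (k-1)·⌊(k² - k)/(λ² + λ)⌋ such that u^ℓ is a factor of x for every positive integer ℓ. In particular, x is not ω-power-free. -/

import Mathlib

/-- `u ^ ℓ` : the finite word `u` concatenated with itself `ℓ` times. -/
def powWord {A : Type*} (u : List A) (ℓ : ℕ) : List A :=
  (List.replicate ℓ u).flatten

/-- The finite word `u` occurs in the infinite word `x` at position `i`. -/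
def OccursAt {A : Type*} (x : ℕ → A) (u : List A) (i : ℕ) : Prop :=
  u = (List.range u.length).map fun j => x (i + j)

/-- The finite word `u` is a factor of the infinite word `x`. -/
def IsFactor {A : Type*} (x : ℕ → A) (u : List A) : Prop :=
  ∃ i, OccursAt x u i

/-- An infinite word `x` is `ω`-power-free if for every nonempty finite factor `u` of `x`
there is an `ℓ` such that `u^ℓ` is not a factor of `x`. -/
def OmegaPowerFree {A : Type*} (x : ℕ → A) : Prop :=
  ∀ u : List A, u ≠ [] → IsFactor x u → ∃ ℓ : ℕ, ¬ IsFactor x (powWord u ℓ)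

/-- The `i`-th block of length `m` of the infinite word `x`. -/
def blockAt {A : Type*} (x : ℕ → A) (m i : ℕ) : List A :=
  (List.range m).map fun t => x (i * m + t)

/-- `APset x k λ` : the set of `m ≥ 1` such that the prefix of `x` of length `k*m` is a
`(k,λ)`-anti-power. -/
def APset {A : Type*} (x : ℕ → A) (k lam : ℕ) : Set ℕ :=
  {m | 1 ≤ m ∧ ∀ j < k,
    Nat.card {i : ℕ // i < k ∧ blockAt x m i = blockAt x m j} ≤ lam}

/-- The lower density of a set of natural numbers. -/
noncomputable def lowerDensity (S : Set ℕ) : ℝ :=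
  Filter.atTop.liminf fun n => (Nat.card ↥(S ∩ Set.Icc 1 n) : ℝ) / n

/-!
If `AP(x, k, λ)` has lower density below `1 / (γ + 1)`, with `γ = ⌊(k² - k) / (λ² + λ)⌋`, then
arbitrarily far out there are `γ + 1` consecutive block lengths `m` that are not anti-power
lengths. For each of them some `λ + 1` of the `k` blocks coincide, giving at least `λ² + λ`
ordered pairs of equal blocks; as `(γ + 1)(λ² + λ) > k² - k`, one pair `i < j` works for two
lengths `m < m'`. Comparing the two coincidences shows that `x` has period
`(j - i)(m' - m) ≤ (k - 1)γ` on a stretch of length about `m`, so a word of that length has a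
large power occurring in `x`. Only finitely many words are that short, so one of them has all
its powers occurring in `x`.
-/

section Words

variable {A : Type*}

lemma powWord_succ (u : List A) (ℓ : ℕ) : powWord u (ℓ + 1) = u ++ powWord u ℓ := by
  rw [powWord, List.replicate_succ, List.flatten_cons, powWord]

lemma powWord_one (u : List A) : powWord u 1 = u := by
  simp [powWord]

lemma OccursAt.of_append {x : ℕ → A} {a b : List A} {i : ℕ}
    (h : OccursAt x (a ++ b) i) : OccursAt x a i := by
  unfold OccursAt at h ⊢
  rw [List.length_append, List.range_add, List.map_append] at h
  exact List.append_inj_left h (by simp)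

lemma IsFactor.powWord_mono {x : ℕ → A} {u : List A} {a b : ℕ} (hab : a ≤ b)
    (h : IsFactor x (powWord u b)) : IsFactor x (powWord u a) := by
  obtain ⟨i, hi⟩ := h
  obtain ⟨c, rfl⟩ := Nat.exists_eq_add_of_le hab
  rw [powWord, List.replicate_add, List.flatten_append] at hi
  exact ⟨i, hi.of_append⟩

lemma powWord_map_range_of_periodic (y : ℕ → A) (P ℓ : ℕ)
    (hy : ∀ t, t + P < ℓ * P → y (t + P) = y t) :
    powWord ((List.range P).map y) ℓ = (List.range (ℓ * P)).map y := by
  induction ℓ with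
  | zero => simp [powWord]
  | succ n ih =>
    rw [powWord_succ, ih fun t ht => hy t (by nlinarith), add_one_mul, add_comm (n * P),
      List.range_add, List.map_append, List.map_map]
    congr 1
    refine List.map_congr_left fun t ht => ?_
    rw [List.mem_range] at ht
    rw [Function.comp_apply, add_comm, hy t (by nlinarith)]

lemma isFactor_powWord_of_periodic {x : ℕ → A} {p P ℓ : ℕ}
    (h : ∀ t, t + P < ℓ * P → x (p + t + P) = x (p + t)) :
    IsFactor x (powWord ((List.range P).map fun t => x (p + t)) ℓ) := by
  refine ⟨p, ?_⟩
  rw [OccursAt, powWord_map_range_of_periodic _ P ℓ fun t ht => by simpa [add_assoc] using h t ht]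
  simp

/-- Each of the finitely many candidates would have a power that is not a factor; the largest
of those exponents is then a counterexample for all of them. -/
lemma exists_forall_isFactor_powWord {x : ℕ → A} {s : Set (List A)} (hs : s.Finite)
    (h : ∀ ℓ, ∃ u ∈ s, IsFactor x (powWord u ℓ)) :
    ∃ u ∈ s, ∀ ℓ, IsFactor x (powWord u ℓ) := by
  by_contra! hnot
  choose! e he using hnot
  obtain ⟨L, hL⟩ := (hs.image e).bddAbove
  obtain ⟨u, hus, hu⟩ := h L
  exact he u hus (hu.powWord_mono (hL ⟨u, hus, rfl⟩))

lemma not_omegaPowerFree_of_forall_isFactor_powWord {x : ℕ → A} {u : List A} (hu : u ≠ [])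
    (h : ∀ ℓ, IsFactor x (powWord u ℓ)) : ¬ OmegaPowerFree x := fun hfree =>
  let ⟨ℓ, hℓ⟩ := hfree u hu (powWord_one u ▸ h 1)
  hℓ (h ℓ)

end Words

section AntiPowers

variable {A : Type*} {x : ℕ → A}

lemma blockAt_eq_iff {m i j : ℕ} :
    blockAt x m i = blockAt x m j ↔ ∀ t < m, x (i * m + t) = x (j * m + t) := by
  simp only [blockAt, List.map_inj_left, List.mem_range]

lemma periodic_of_blockAt_eq {i d m r : ℕ} (h₁ : blockAt x m i = blockAt x m (i + d))
    (h₂ : blockAt x (m + r) i = blockAt x (m + r) (i + d)) {t : ℕ} (ht : i * r + t < m) :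
    x ((i + d) * m + i * r + t + d * r) = x ((i + d) * m + i * r + t) := by
  calc x ((i + d) * m + i * r + t + d * r) = x ((i + d) * (m + r) + t) := by ring_nf
    _ = x (i * (m + r) + t) := (blockAt_eq_iff.1 h₂ t (by omega)).symm
    _ = x (i * m + (i * r + t)) := by ring_nf
    _ = x ((i + d) * m + (i * r + t)) := blockAt_eq_iff.1 h₁ _ ht
    _ = x ((i + d) * m + i * r + t) := by ring_nf

lemma isFactor_powWord_of_blockAt_eq {i d m r : ℕ} (h₁ : blockAt x m i = blockAt x m (i + d))
    (h₂ : blockAt x (m + r) i = blockAt x (m + r) (i + d)) {ℓ : ℕ}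
    (hℓ : i * r + ℓ * (d * r) ≤ m) :
    IsFactor x (powWord ((List.range (d * r)).map fun t => x ((i + d) * m + i * r + t)) ℓ) :=
  isFactor_powWord_of_periodic fun t ht => periodic_of_blockAt_eq h₁ h₂ (by omega)

lemma exists_large_class_of_not_mem_APset {k lam m : ℕ} (hm : 1 ≤ m)
    (h : m ∉ APset x k lam) : ∃ T ⊆ Finset.range k, lam + 1 ≤ T.card ∧
      ∀ i ∈ T, ∀ j ∈ T, blockAt x m i = blockAt x m j := by
  classical
  obtain ⟨j, -, hj⟩ : ∃ j < k,
      lam < Nat.card {i : ℕ // i < k ∧ blockAt x m i = blockAt x m j} := by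
    by_contra! h'
    exact h ⟨hm, h'⟩
  refine ⟨(Finset.range k).filter (blockAt x m · = blockAt x m j), Finset.filter_subset _ _,
    ?_, fun a ha b hb => (Finset.mem_filter.1 ha).2.trans (Finset.mem_filter.1 hb).2.symm⟩
  rw [← Nat.card_eq_finsetCard]
  exact (Nat.card_congr (Equiv.subtypeEquivRight fun i => by simp)).ge.trans' hj

lemma le_card_offDiag {α : Type*} {s : Finset α} {n : ℕ} (h : n + 1 ≤ s.card) :
    n ^ 2 + n ≤ s.offDiag.card := by
  rw [Finset.offDiag_card]
  zify [Nat.le_mul_self s.card]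
  nlinarith

/-- Pigeonhole over the pairs `(m, (i, j))` of a length in the window and an ordered pair of
equal blocks at that length: there are more than `k ^ 2 - k` of them. -/
lemma exists_blockAt_eq_at_two_lengths {k lam γ M : ℕ}
    (hγ : k ^ 2 - k < (γ + 1) * (lam ^ 2 + lam)) (hM : 1 ≤ M)
    (hwin : ∀ r ≤ γ, M + r ∉ APset x k lam) :
    ∃ i j m m', i < j ∧ j < k ∧ M ≤ m ∧ m < m' ∧ m' ≤ M + γ ∧
      blockAt x m i = blockAt x m j ∧ blockAt x m' i = blockAt x m' j := by
  classical
  let U := (Finset.range k).offDiag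
  let W := Finset.Icc M (M + γ)
  let pairs m := U.filter fun p => blockAt x m p.1 = blockAt x m p.2
  have hpairs : ∀ m ∈ W, lam ^ 2 + lam ≤ (pairs m).card := by
    intro m hm
    rw [Finset.mem_Icc] at hm
    have hwin_m := hwin (m - M) (by omega)
    rw [Nat.add_sub_cancel' hm.1] at hwin_m
    obtain ⟨T, hTk, hTcard, hTeq⟩ := exists_large_class_of_not_mem_APset (by omega) hwin_m
    refine (le_card_offDiag hTcard).trans (Finset.card_le_card fun p hp => ?_)
    rw [Finset.mem_offDiag] at hp
    exact Finset.mem_filter.2 ⟨Finset.mem_offDiag.2 ⟨hTk hp.1, hTk hp.2.1, hp.2.2⟩,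
      hTeq _ hp.1 _ hp.2.1⟩
  have hcard : U.card < (W.sigma pairs).card := by
    calc U.card = k ^ 2 - k := by simp [U, Finset.offDiag_card, sq]
      _ < (γ + 1) * (lam ^ 2 + lam) := hγ
      _ = ∑ _m ∈ W, (lam ^ 2 + lam) := by
        rw [Finset.sum_const, Nat.card_Icc, smul_eq_mul, add_assoc, Nat.add_sub_cancel_left]
      _ ≤ (W.sigma pairs).card := (Finset.sum_le_sum hpairs).trans_eq (Finset.card_sigma _ _).symm
  obtain ⟨⟨m, p⟩, hmp, ⟨m', p'⟩, hmp', hne, hpp'⟩ :=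
    Finset.exists_ne_map_eq_of_card_lt_of_maps_to hcard (f := Sigma.snd)
      fun q hq => (Finset.mem_filter.1 (Finset.mem_sigma.1 hq).2).1
  obtain rfl : p = p' := hpp'
  simp only [Finset.mem_sigma, Finset.mem_Icc, Finset.mem_filter, Finset.mem_offDiag,
    Finset.mem_range, U, W, pairs] at hmp hmp'
  have hmm : m ≠ m' := fun h => hne (h ▸ rfl)
  rcases hmm.lt_or_gt with hlt | hlt <;> rcases hmp.2.1.2.2.lt_or_gt with hij | hij
  · exact ⟨_, _, m, m', hij, hmp.2.1.2.1, hmp.1.1, hlt, hmp'.1.2, hmp.2.2, hmp'.2.2⟩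
  · exact ⟨_, _, m, m', hij, hmp.2.1.1, hmp.1.1, hlt, hmp'.1.2, hmp.2.2.symm, hmp'.2.2.symm⟩
  · exact ⟨_, _, m', m, hij, hmp.2.1.2.1, hmp'.1.1, hlt, hmp.1.2, hmp'.2.2, hmp.2.2⟩
  · exact ⟨_, _, m', m, hij, hmp.2.1.1, hmp'.1.1, hlt, hmp.1.2, hmp'.2.2.symm, hmp.2.2.symm⟩

lemma exists_isFactor_powWord_of_window {k lam γ M : ℕ}
    (hγ : k ^ 2 - k < (γ + 1) * (lam ^ 2 + lam)) (hM : 1 ≤ M)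
    (hwin : ∀ r ≤ γ, M + r ∉ APset x k lam) {ℓ : ℕ}
    (hℓ : (ℓ + 1) * ((k - 1) * γ) ≤ M) :
    ∃ u : List A, u ≠ [] ∧ u.length ≤ (k - 1) * γ ∧ IsFactor x (powWord u ℓ) := by
  obtain ⟨i, j, m, m', hij, hjk, hMm, hmm', hm'M, h₁, h₂⟩ :=
    exists_blockAt_eq_at_two_lengths hγ hM hwin
  obtain ⟨d, rfl⟩ := Nat.exists_eq_add_of_lt hij
  obtain ⟨r, rfl⟩ := Nat.exists_eq_add_of_lt hmm'
  have hd : d + 1 ≤ k - 1 := by omega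
  have hi : i ≤ k - 1 := by omega
  have hr : r + 1 ≤ γ := by omega
  have hlen : (d + 1) * (r + 1) ≤ (k - 1) * γ := Nat.mul_le_mul hd hr
  have hstart : i * (r + 1) ≤ (k - 1) * γ := Nat.mul_le_mul hi hr
  have hpow : ℓ * ((d + 1) * (r + 1)) ≤ ℓ * ((k - 1) * γ) := Nat.mul_le_mul_left ℓ hlen
  refine ⟨_, ?_, ?_, isFactor_powWord_of_blockAt_eq (add_assoc i d 1 ▸ h₁)
    (by simpa only [add_assoc] using h₂) (by nlinarith)⟩
  · simp
  · simpa using hlen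

end AntiPowers

section Density

lemma le_card_inter_Icc_of_forall_exists_mem {S : Set ℕ} {γ N : ℕ} (hN : 1 ≤ N)
    (h : ∀ M ≥ N, ∃ r ≤ γ, M + r ∈ S) (n : ℕ) :
    (n - N) / (γ + 1) ≤ Nat.card ↥(S ∩ Set.Icc 1 n) := by
  choose r hr hrS using fun t => h (N + t * (γ + 1)) (Nat.le_add_right _ _)
  set T := (n - N) / (γ + 1)
  have hT : T * (γ + 1) ≤ n - N := Nat.div_mul_le_self _ _
  let a t := N + t * (γ + 1) + r t
  have ha : StrictMono a := strictMono_nat_of_lt_succ fun t => by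
    have := hr t
    simp only [a, add_one_mul]
    omega
  have ha_le (t : Fin T) : a t ≤ n := by
    have := hr t
    have : (t + 1) * (γ + 1) ≤ T * (γ + 1) := Nat.mul_le_mul_right _ t.2
    simp only [a]
    rw [add_one_mul] at this
    omega
  have : Finite ↥(S ∩ Set.Icc 1 n) :=
    ((Set.finite_Icc 1 n).subset Set.inter_subset_right).to_subtype
  calc T = Nat.card (Fin T) := (Nat.card_fin T).symm
    _ ≤ Nat.card ↥(S ∩ Set.Icc 1 n) :=
      Nat.card_le_card_of_injective
        (fun t => ⟨a t, hrS t, hN.trans (by simp only [a]; omega), ha_le t⟩)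
        fun s t hst => Fin.val_injective (ha.injective (congrArg Subtype.val hst))

lemma card_inter_Icc_div_le_one (S : Set ℕ) (n : ℕ) :
    (Nat.card ↥(S ∩ Set.Icc 1 n) : ℝ) / n ≤ 1 := by
  refine div_le_one_of_le₀ ?_ (Nat.cast_nonneg n)
  have := Nat.card_mono (Set.finite_Icc 1 n) (Set.inter_subset_right (s := S))
  exact_mod_cast this.trans (by simp)

lemma inv_one_add_le_lowerDensity {S : Set ℕ} {γ N : ℕ}
    (h : ∀ M ≥ N, ∃ r ≤ γ, M + r ∈ S) :
    ((1 : ℝ) + γ)⁻¹ ≤ lowerDensity S := by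
  set c : ℝ := ((1 : ℝ) + γ)⁻¹
  set C : ℝ := (N + γ + 2) / (1 + γ)
  have hg : Filter.Tendsto (fun n : ℕ => c - C / n) Filter.atTop (nhds c) := by
    simpa using (tendsto_const_div_atTop_nhds_zero_nat C).const_sub c
  have hle : ∀ᶠ n : ℕ in Filter.atTop,
      c - C / n ≤ (Nat.card ↥(S ∩ Set.Icc 1 n) : ℝ) / n := by
    filter_upwards [Filter.eventually_ge_atTop 1] with n hn
    have hcount := le_card_inter_Icc_of_forall_exists_mem (N := N + 1) (by omega)
      (fun M hM => h M (by omega)) n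
    have hdiv := Nat.lt_div_mul_add (a := n - (N + 1)) (by omega : 0 < γ + 1)
    set T := (n - (N + 1)) / (γ + 1)
    have hnT : n < T * (γ + 1) + (γ + 1) + (N + 1) := by omega
    have hnT' : (n : ℝ) - (N + γ + 2) ≤ (1 + γ) * T := by
      have : (n : ℝ) < T * (γ + 1) + (γ + 1) + (N + 1) := by exact_mod_cast hnT
      linarith
    have hn' : (0 : ℝ) < n := by exact_mod_cast hn
    calc c - C / n = ((n : ℝ) - (N + γ + 2)) / ((1 + γ) * n) := by
          simp only [c, C]
          field_simp
      _ ≤ T / n := by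
          rw [div_le_div_iff₀ (by positivity) hn']
          nlinarith
      _ ≤ (Nat.card ↥(S ∩ Set.Icc 1 n) : ℝ) / n := by gcongr
  calc c = Filter.atTop.liminf (fun n : ℕ => c - C / n) := hg.liminf_eq.symm
    _ ≤ lowerDensity S := Filter.liminf_le_liminf hle hg.isBoundedUnder_ge
      (Filter.isCoboundedUnder_ge_of_le _ (card_inter_Icc_div_le_one S))

end Density

theorem statement2_general {A : Type*} [Finite A] (k lam : ℕ) (hlam : 1 ≤ lam)
    (x : ℕ → A)
    (hd : lowerDensity (APset x k lam) < ((1 : ℝ) + ((k ^ 2 - k) / (lam ^ 2 + lam) : ℕ))⁻¹) :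
    (∃ u : List A, u ≠ [] ∧ u.length ≤ (k - 1) * ((k ^ 2 - k) / (lam ^ 2 + lam)) ∧
      ∀ ℓ : ℕ, 0 < ℓ → IsFactor x (powWord u ℓ)) ∧ ¬ OmegaPowerFree x := by
  set γ := (k ^ 2 - k) / (lam ^ 2 + lam)
  have hγ : k ^ 2 - k < (γ + 1) * (lam ^ 2 + lam) := by
    rw [add_one_mul]
    exact Nat.lt_div_mul_add (by positivity)
  have hwindow : ∀ N, ∃ M ≥ N, 1 ≤ M ∧ ∀ r ≤ γ, M + r ∉ APset x k lam := by
    by_contra! h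
    obtain ⟨N, hN⟩ := h
    exact hd.not_ge <|
      inv_one_add_le_lowerDensity (N := N + 1) fun M hM => hN M (by omega) (by omega)
  have hpowers (ℓ : ℕ) : ∃ u ∈ {u : List A | u ≠ [] ∧ u.length ≤ (k - 1) * γ},
      IsFactor x (powWord u ℓ) := by
    obtain ⟨M, hMℓ, hM, hwin⟩ := hwindow ((ℓ + 1) * ((k - 1) * γ))
    obtain ⟨u, hu, hlen, hfac⟩ := exists_isFactor_powWord_of_window hγ hM hwin hMℓ
    exact ⟨u, ⟨hu, hlen⟩, hfac⟩
  obtain ⟨u, ⟨hu, hlen⟩, hfac⟩ :=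
    exists_forall_isFactor_powWord ((List.finite_length_le A _).subset fun u hu => hu.2) hpowers
  exact ⟨⟨u, hu, hlen, fun ℓ _ => hfac ℓ⟩,
    not_omegaPowerFree_of_forall_isFactor_powWord hu hfac⟩

/-- Over a finite alphabet, if `k ≥ 2`, `λ ≥ 1` and the lower density of
`AP(x,k,λ)` is strictly less than `(1 + ⌊(k² - k)/(λ² + λ)⌋)⁻¹`, then there is a single
nonempty word `u` with `|u| ≤ (k-1)·⌊(k² - k)/(λ² + λ)⌋` such that `u^ℓ` is a factor of `x`
for every `ℓ ≥ 1`; in particular, `x` is not `ω`-power-free. -/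
theorem statement2 {A : Type*} [Finite A] (k lam : ℕ) (hk : 2 ≤ k) (hlam : 1 ≤ lam)
    (x : ℕ → A)
    (hd : lowerDensity (APset x k lam) < ((1 : ℝ) + ((k ^ 2 - k) / (lam ^ 2 + lam) : ℕ))⁻¹) :
    (∃ u : List A, u ≠ [] ∧ u.length ≤ (k - 1) * ((k ^ 2 - k) / (lam ^ 2 + lam)) ∧
      ∀ ℓ : ℕ, 0 < ℓ → IsFactor x (powWord u ℓ)) ∧ ¬ OmegaPowerFree x :=
  statement2_general k lam hlam x hd
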